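/- Let ς:H⊗H→A be a k-linear map such that ρ and ς satisfy conditions (11), (18) and (19). Then for all h,l ∈ H: ε(h⁽¹⁾l⁽¹⁾)ς(h⁽²⁾⊗l⁽²⁾) = ς(h⊗l). -/

import Mathlib

open scoped TensorProduct

/-- The data of a weak bialgebra structure (together with an antipode and its
inverse) on a `k`-algebra `H`: a comultiplication `Δ`, a counit `ε`, an
antipode `S` and its inverse `Sinv`. -/
structure WeakHopfData (k H : Type*) [Field k] [Ring H] [Algebra k H] where
  Δ : H →ₗ[k] H ⊗[k] H
  ε : H →ₗ[k] k
  S : H →ₗ[k] H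
  Sinv : H →ₗ[k] H

section

variable {k H A : Type*} [Field k] [Ring H] [Algebra k H] [Ring A] [Algebra k A]

/-- `Π^L(h) = ε(1⁽¹⁾h)1⁽²⁾`. -/
noncomputable def piL (W : WeakHopfData k H) (h : H) : H :=
  (TensorProduct.lid k H) ((LinearMap.rTensor H (W.ε ∘ₗ LinearMap.mulRight k h)) (W.Δ 1))

/-- `Π^R(h) = 1⁽¹⁾ε(h1⁽²⁾)`. -/
noncomputable def piR (W : WeakHopfData k H) (h : H) : H :=
  (TensorProduct.rid k H) ((LinearMap.lTensor H (W.ε ∘ₗ LinearMap.mulLeft k h)) (W.Δ 1))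

/-- `H^L = im(Π^L)`. -/
def HL (W : WeakHopfData k H) : Set H := Set.range (piL W)

/-- `H^R = im(Π^R)`. -/
def HR (W : WeakHopfData k H) : Set H := Set.range (piR W)

/-- The axioms of a weak Hopf algebra with bijective antipode, where Sweedler
sums are expressed via arbitrary finite representations of the comultiplication. -/
structure IsWeakHopf (W : WeakHopfData k H) : Prop where
  coassoc : ∀ h : H,
    (TensorProduct.assoc k H H H) ((LinearMap.rTensor H W.Δ) (W.Δ h)) =
      (LinearMap.lTensor H W.Δ) (W.Δ h)
  counit_left : ∀ h : H, (TensorProduct.lid k H) ((LinearMap.rTensor H W.ε) (W.Δ h)) = h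
  counit_right : ∀ h : H, (TensorProduct.rid k H) ((LinearMap.lTensor H W.ε) (W.Δ h)) = h
  comul_mul : ∀ h l : H, W.Δ (h * l) = W.Δ h * W.Δ l
  weak_comul_one₁ : (LinearMap.lTensor H W.Δ) (W.Δ 1) =
    (TensorProduct.assoc k H H H) (W.Δ 1 ⊗ₜ[k] (1 : H)) * ((1 : H) ⊗ₜ[k] W.Δ 1)
  weak_comul_one₂ : (LinearMap.lTensor H W.Δ) (W.Δ 1) =
    ((1 : H) ⊗ₜ[k] W.Δ 1) * (TensorProduct.assoc k H H H) (W.Δ 1 ⊗ₜ[k] (1 : H))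
  weak_counit : ∀ h l m : H, ∀ (n : ℕ) (x y : Fin n → H),
    W.Δ l = ∑ i, x i ⊗ₜ[k] y i →
      W.ε (h * l * m) = ∑ i, W.ε (h * x i) * W.ε (y i * m) ∧
      W.ε (h * l * m) = ∑ i, W.ε (h * y i) * W.ε (x i * m)
  antipode_left : ∀ h : H, ∀ (n : ℕ) (x y : Fin n → H),
    W.Δ h = ∑ i, x i ⊗ₜ[k] y i → ∑ i, x i * W.S (y i) = piL W h
  antipode_right : ∀ h : H, ∀ (n : ℕ) (x y : Fin n → H),
    W.Δ h = ∑ i, x i ⊗ₜ[k] y i → ∑ i, W.S (x i) * y i = piR W h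
  antipode_mid : ∀ h : H, ∀ (n : ℕ) (x y : Fin n → H),
    W.Δ h = ∑ i, x i ⊗ₜ[k] y i →
      ∀ (m : Fin n → ℕ) (u v : (i : Fin n) → Fin (m i) → H),
        (∀ i, W.Δ (y i) = ∑ j, u i j ⊗ₜ[k] v i j) →
          ∑ i, ∑ j, W.S (x i) * u i j * W.S (v i j) = W.S h
  S_Sinv : ∀ h : H, W.S (W.Sinv h) = h
  Sinv_S : ∀ h : H, W.Sinv (W.S h) = h

/-- Condition (1): `h·1_A = Π^L(h)·1_A`. -/
def cond1 (W : WeakHopfData k H) (ρ : H →ₗ[k] A →ₗ[k] A) : Prop :=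
  ∀ h : H, ρ h 1 = ρ (piL W h) 1

/-- Condition (2): `h·(aa') = (h⁽¹⁾·a)(h⁽²⁾·a')`. -/
def cond2 (W : WeakHopfData k H) (ρ : H →ₗ[k] A →ₗ[k] A) : Prop :=
  ∀ (h : H) (a a' : A) (n : ℕ) (x y : Fin n → H),
    W.Δ h = ∑ i, x i ⊗ₜ[k] y i → ρ h (a * a') = ∑ i, ρ (x i) a * ρ (y i) a'

/-- Condition (3): `S⁻¹(l)h·a = (h·a)(l·1_A)` and `lh·a = (l·1_A)(h·a)` for `l ∈ H^L`. -/
def cond3 (W : WeakHopfData k H) (ρ : H →ₗ[k] A →ₗ[k] A) : Prop :=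
  ∀ (h : H) (a : A), ∀ l ∈ HL W,
    ρ (W.Sinv l * h) a = ρ h a * ρ l 1 ∧ ρ (l * h) a = ρ l 1 * ρ h a

/-- Condition (4): `1·a = a`. -/
def cond4 (ρ : H →ₗ[k] A →ₗ[k] A) : Prop := ∀ a : A, ρ 1 a = a

/-- Condition (5). -/
def cond5 (W : WeakHopfData k H) (ρ : H →ₗ[k] A →ₗ[k] A) (σ : H → H → A) : Prop :=
  ∀ (h g : H), ∀ l ∈ HL W,
    σ (l * h) g = ρ l 1 * σ h g ∧ σ (W.Sinv l * h) g = σ h g * ρ l 1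

/-- Condition (6): `(h⁽¹⁾·(l·1_A))σ(h⁽²⁾,k) = σ(h,lk)` for `l ∈ H^L`. -/
def cond6 (W : WeakHopfData k H) (ρ : H →ₗ[k] A →ₗ[k] A) (σ : H → H → A) : Prop :=
  ∀ (h g : H), ∀ l ∈ HL W, ∀ (n : ℕ) (x y : Fin n → H),
    W.Δ h = ∑ i, x i ⊗ₜ[k] y i →
      ∑ i, ρ (x i) (ρ l 1) * σ (y i) g = σ h (l * g)

/-- Condition (7): `σ(1,h) = σ(h,1) = h·1_A`. -/
def cond7 (ρ : H →ₗ[k] A →ₗ[k] A) (σ : H → H → A) : Prop :=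
  ∀ h : H, σ 1 h = ρ h 1 ∧ σ h 1 = ρ h 1

/-- Condition (8), the cocycle condition. -/
def cond8 (W : WeakHopfData k H) (ρ : H →ₗ[k] A →ₗ[k] A) (σ : H → H → A) : Prop :=
  ∀ (h g m : H) (n₁ : ℕ) (x₁ y₁ : Fin n₁ → H) (n₂ : ℕ) (x₂ y₂ : Fin n₂ → H)
    (n₃ : ℕ) (x₃ y₃ : Fin n₃ → H),
    W.Δ h = ∑ i, x₁ i ⊗ₜ[k] y₁ i → W.Δ g = ∑ i, x₂ i ⊗ₜ[k] y₂ i →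
    W.Δ m = ∑ i, x₃ i ⊗ₜ[k] y₃ i →
      ∑ i, ∑ j, ∑ p, ρ (x₁ i) (σ (x₂ j) (x₃ p)) * σ (y₁ i) (y₂ j * y₃ p) =
        ∑ i, ∑ j, σ (x₁ i) (x₂ j) * σ (y₁ i * y₂ j) m

/-- Condition (9), the twisted module condition. -/
def cond9 (W : WeakHopfData k H) (ρ : H →ₗ[k] A →ₗ[k] A) (σ : H → H → A) : Prop :=
  ∀ (h g : H) (a : A) (n : ℕ) (x y : Fin n → H) (m : ℕ) (u v : Fin m → H),
    W.Δ h = ∑ i, x i ⊗ₜ[k] y i → W.Δ g = ∑ j, u j ⊗ₜ[k] v j →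
      ∑ i, ∑ j, ρ (x i) (ρ (u j) a) * σ (y i) (v j) =
        ∑ i, ∑ j, σ (x i) (u j) * ρ (y i * v j) a

/-- Condition (10): `h·(l·1_A) = hl·1_A` for `l ∈ H^L`. -/
def cond10 (W : WeakHopfData k H) (ρ : H →ₗ[k] A →ₗ[k] A) : Prop :=
  ∀ h : H, ∀ l ∈ HL W, ρ h (ρ l 1) = ρ (h * l) 1

/-- Condition (11): `h·(l·1_A) = hl·1_A` for all `h, l ∈ H`. -/
def cond11 (ρ : H →ₗ[k] A →ₗ[k] A) : Prop :=
  ∀ h l : H, ρ h (ρ l 1) = ρ (h * l) 1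

/-- Condition (12): `σ(h,l) = σ(hl,1)` for `l ∈ H^L`. -/
def cond12 (W : WeakHopfData k H) (σ : H → H → A) : Prop :=
  ∀ h : H, ∀ l ∈ HL W, σ h l = σ (h * l) 1

/-- Condition (13). -/
def cond13 (W : WeakHopfData k H) (ρ : H →ₗ[k] A →ₗ[k] A) (σbar : H → H → A) : Prop :=
  ∀ (h g : H) (n : ℕ) (x y : Fin n → H) (m : ℕ) (u v : Fin m → H),
    W.Δ h = ∑ i, x i ⊗ₜ[k] y i → W.Δ g = ∑ j, u j ⊗ₜ[k] v j →
      σbar h g = ∑ i, ∑ j, ρ (x i * u j) 1 * σbar (y i) (v j)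

/-- Condition (14). -/
def cond14 (W : WeakHopfData k H) (ρ : H →ₗ[k] A →ₗ[k] A) (σbar : H → H → A) : Prop :=
  ∀ (h g : H), ∀ l ∈ HL W,
    σbar (l * h) g = ρ l 1 * σbar h g ∧ σbar (W.Sinv l * h) g = σbar h g * ρ l 1

/-- Condition (15). -/
def cond15 (W : WeakHopfData k H) (ρ : H →ₗ[k] A →ₗ[k] A) (σbar : H → H → A) : Prop :=
  ∀ (h g : H), ∀ l ∈ HL W, ∀ (n : ℕ) (x y : Fin n → H),
    W.Δ h = ∑ i, x i ⊗ₜ[k] y i →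
      ∑ i, σbar (x i) g * ρ (y i) (ρ l 1) = σbar h (W.Sinv l * g)

/-- Condition (16). -/
def cond16 (W : WeakHopfData k H) (ρ : H →ₗ[k] A →ₗ[k] A) (σ σbar : H → H → A) : Prop :=
  ∀ (h g : H) (n : ℕ) (x y : Fin n → H) (m : ℕ) (u v : Fin m → H),
    W.Δ h = ∑ i, x i ⊗ₜ[k] y i → W.Δ g = ∑ j, u j ⊗ₜ[k] v j →
      (∑ i, ∑ j, σ (x i) (u j) * σbar (y i) (v j) = ρ h (ρ g 1)) ∧
      (∑ i, ∑ j, σbar (x i) (u j) * σ (y i) (v j) = ρ (h * g) 1)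

/-- Condition (17), the cocycle condition for `ς : H ⊗ H → A`. -/
def cond17 (W : WeakHopfData k H) (ρ : H →ₗ[k] A →ₗ[k] A) (ς : H ⊗[k] H → A) : Prop :=
  ∀ (h g m : H) (n₁ : ℕ) (x₁ y₁ : Fin n₁ → H) (n₂ : ℕ) (x₂ y₂ : Fin n₂ → H)
    (n₃ : ℕ) (x₃ y₃ : Fin n₃ → H),
    W.Δ h = ∑ i, x₁ i ⊗ₜ[k] y₁ i → W.Δ g = ∑ i, x₂ i ⊗ₜ[k] y₂ i →
    W.Δ m = ∑ i, x₃ i ⊗ₜ[k] y₃ i →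
      ∑ i, ∑ j, ∑ p, ρ (x₁ i) (ς (x₂ j ⊗ₜ[k] x₃ p)) * ς (y₁ i ⊗ₜ[k] (y₂ j * y₃ p)) =
        ∑ i, ∑ j, ς (x₁ i ⊗ₜ[k] x₂ j) * ς ((y₁ i * y₂ j) ⊗ₜ[k] m)

/-- Condition (18), the twisted module condition for `ς : H ⊗ H → A`. -/
def cond18 (W : WeakHopfData k H) (ρ : H →ₗ[k] A →ₗ[k] A) (ς : H ⊗[k] H → A) : Prop :=
  ∀ (h g : H) (a : A) (n : ℕ) (x y : Fin n → H) (m : ℕ) (u v : Fin m → H),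
    W.Δ h = ∑ i, x i ⊗ₜ[k] y i → W.Δ g = ∑ j, u j ⊗ₜ[k] v j →
      ∑ i, ∑ j, ρ (x i) (ρ (u j) a) * ς (y i ⊗ₜ[k] v j) =
        ∑ i, ∑ j, ς (x i ⊗ₜ[k] u j) * ρ (y i * v j) a

/-- Condition (19). -/
def cond19 (W : WeakHopfData k H) (ρ : H →ₗ[k] A →ₗ[k] A) (ς : H ⊗[k] H → A) : Prop :=
  ∀ (h g : H) (n : ℕ) (x y : Fin n → H) (m : ℕ) (u v : Fin m → H),
    W.Δ h = ∑ i, x i ⊗ₜ[k] y i → W.Δ g = ∑ j, u j ⊗ₜ[k] v j →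
      ς (h ⊗ₜ[k] g) = ∑ i, ∑ j, ς (x i ⊗ₜ[k] u j) * ρ (y i * v j) 1

/-- Condition (20). -/
def cond20 (W : WeakHopfData k H) (ρ : H →ₗ[k] A →ₗ[k] A) (ς : H ⊗[k] H → A) : Prop :=
  ∀ (h : H) (n : ℕ) (x y : Fin n → H) (m : ℕ) (u v : Fin m → H),
    W.Δ h = ∑ i, x i ⊗ₜ[k] y i → W.Δ 1 = ∑ j, u j ⊗ₜ[k] v j →
      ρ h 1 = ∑ i, ∑ j, ρ (x i) (ρ (u j) 1) * ς (y i ⊗ₜ[k] v j)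

/-- Condition (21). -/
def cond21 (W : WeakHopfData k H) (ρ : H →ₗ[k] A →ₗ[k] A) (ς : H ⊗[k] H → A) : Prop :=
  ∀ (h : H) (m : ℕ) (u v : Fin m → H),
    W.Δ 1 = ∑ j, u j ⊗ₜ[k] v j →
      ρ h 1 = ∑ j, ρ (u j) 1 * ς (v j ⊗ₜ[k] h)

/-- Condition (22): `a(1⁽¹⁾·1_A) ⊗ 1⁽²⁾ = (1⁽¹⁾·a) ⊗ 1⁽²⁾` in `A ⊗ H`. -/
def cond22 (W : WeakHopfData k H) (ρ : H →ₗ[k] A →ₗ[k] A) : Prop :=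
  ∀ (a : A) (m : ℕ) (u v : Fin m → H),
    W.Δ 1 = ∑ j, u j ⊗ₜ[k] v j →
      (∑ j, (a * ρ (u j) 1) ⊗ₜ[k] v j) = ∑ j, (ρ (u j) a) ⊗ₜ[k] v j

/-- Condition (23). -/
def cond23 (W : WeakHopfData k H) (ρ : H →ₗ[k] A →ₗ[k] A) (ςbar : H ⊗[k] H → A) : Prop :=
  ∀ (h g : H) (n : ℕ) (x y : Fin n → H) (m : ℕ) (u v : Fin m → H),
    W.Δ h = ∑ i, x i ⊗ₜ[k] y i → W.Δ g = ∑ j, u j ⊗ₜ[k] v j →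
      ςbar (h ⊗ₜ[k] g) = ∑ i, ∑ j, ρ (x i * u j) 1 * ςbar (y i ⊗ₜ[k] v j)

/-- Condition (24). -/
def cond24 (W : WeakHopfData k H) (ρ : H →ₗ[k] A →ₗ[k] A) (ς ςbar : H ⊗[k] H → A) : Prop :=
  ∀ (h g : H) (n : ℕ) (x y : Fin n → H) (m : ℕ) (u v : Fin m → H),
    W.Δ h = ∑ i, x i ⊗ₜ[k] y i → W.Δ g = ∑ j, u j ⊗ₜ[k] v j →
      (∑ i, ∑ j, ς (x i ⊗ₜ[k] u j) * ςbar (y i ⊗ₜ[k] v j) = ρ (h * g) 1) ∧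
      (∑ i, ∑ j, ςbar (x i ⊗ₜ[k] u j) * ς (y i ⊗ₜ[k] v j) = ρ (h * g) 1)

/-- `σ` is `H^R`-balanced: `σ(hr,k) = σ(h,rk)` for `r ∈ H^R`. -/
def HRBalanced (W : WeakHopfData k H) (σ : H → H → A) : Prop :=
  ∀ (h g : H), ∀ r ∈ HR W, σ (h * r) g = σ h (r * g)

/-- `σbar` is `H^L`-balanced: `σbar(hl,k) = σbar(h,lk)` for `l ∈ H^L`. -/
def HLBalanced (W : WeakHopfData k H) (σbar : H → H → A) : Prop :=
  ∀ (h g : H), ∀ l ∈ HL W, σbar (h * l) g = σbar h (l * g)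

/-- The idempotent `∇ρ : A ⊗ H → A ⊗ H`, `a ⊗ h ↦ a(h⁽¹⁾·1_A) ⊗ h⁽²⁾`. -/
noncomputable def nabla (W : WeakHopfData k H) (ρ : H →ₗ[k] A →ₗ[k] A) :
    A ⊗[k] H →ₗ[k] A ⊗[k] H :=
  (LinearMap.rTensor H (LinearMap.mul' k A ∘ₗ LinearMap.lTensor A (ρ.flip 1))) ∘ₗ
    (TensorProduct.assoc k A H H).symm.toLinearMap ∘ₗ LinearMap.lTensor A W.Δ

/-- The subspace `N` of `A ⊗ H` spanned by the elements
`a(l·1_A) ⊗ h - a ⊗ lh` with `l ∈ H^L`, so that `(A ⊗ H)/N = A ⊗_{H^L} H`. -/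
def relN (W : WeakHopfData k H) (ρ : H →ₗ[k] A →ₗ[k] A) : Submodule k (A ⊗[k] H) :=
  Submodule.span k
    {z | ∃ (a : A) (l h : H), l ∈ HL W ∧ z = (a * ρ l 1) ⊗ₜ[k] h - a ⊗ₜ[k] (l * h)}

/-- The map `σ̃(h,k) := (h⁽¹⁾k⁽¹⁾·1_A)σ̄(h⁽²⁾,k⁽²⁾)`. -/
noncomputable def sigmaTilde (W : WeakHopfData k H) (ρ : H →ₗ[k] A →ₗ[k] A)
    (σbar : H →ₗ[k] H →ₗ[k] A) : H → H → A := fun h g =>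
  LinearMap.mul' k A
    ((TensorProduct.map ((ρ.flip 1) ∘ₗ LinearMap.mul' k H) (TensorProduct.lift σbar))
      ((TensorProduct.tensorTensorTensorComm k H H H H) (W.Δ h ⊗ₜ[k] W.Δ g)))

end

/-! `diagCoaction Δ (h ⊗ l) = h⁽¹⁾l⁽¹⁾ ⊗ (h⁽²⁾ ⊗ l⁽²⁾)` is a coassociative left coaction of `H`
on `H ⊗ H`; since `H` is only a weak bialgebra it is not counital, but any coassociative
coaction `F` still satisfies `F ∘ (ε ⊗ id) ∘ F = F`. Conditions (11), (18) and (19) say exactly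
that `ς(h ⊗ l) = (h⁽¹⁾l⁽¹⁾·1_A) ς(h⁽²⁾ ⊗ l⁽²⁾)`, i.e. that `ς` factors through `diagCoaction`,
so `ς ∘ (ε ⊗ id) ∘ diagCoaction = ς`, which is the claim. -/

open TensorProduct Coalgebra

section Coaction

variable {R C M : Type*} [CommSemiring R] [AddCommMonoid C] [Module R C] [Coalgebra R C]
  [AddCommMonoid M] [Module R M]

theorem lid_rTensor_counit_assoc_tmul (t : C ⊗[R] C) (m : M) :
    TensorProduct.lid R (C ⊗[R] M) (counit.rTensor _ (TensorProduct.assoc R C C M (t ⊗ₜ m))) =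
      TensorProduct.lid R C (counit.rTensor C t) ⊗ₜ m := by
  induction t with
  | zero => simp
  | add s t hs ht => simp only [add_tmul, map_add, hs, ht]
  | tmul a b => simp [smul_tmul']

theorem lid_rTensor_counit_assoc_rTensor_comul (t : C ⊗[R] M) :
    TensorProduct.lid R (C ⊗[R] M) (counit.rTensor _
      (TensorProduct.assoc R C C M (comul.rTensor M t))) = t := by
  induction t with
  | zero => simp
  | add s t hs ht => simp only [map_add, hs, ht]
  | tmul c m =>
    rw [LinearMap.rTensor_tmul, lid_rTensor_counit_assoc_tmul, rTensor_counit_comul,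
      lid_tmul, one_smul]

theorem lid_rTensor_counit_lTensor (F : M →ₗ[R] C ⊗[R] M) (t : C ⊗[R] M) :
    TensorProduct.lid R (C ⊗[R] M) (counit.rTensor _ (F.lTensor C t)) =
      F (TensorProduct.lid R M (counit.rTensor M t)) := by
  induction t with
  | zero => simp
  | add s t hs ht => simp only [map_add, hs, ht]
  | tmul c m => simp

theorem coaction_lid_rTensor_counit_coaction (F : M →ₗ[R] C ⊗[R] M)
    (hF : ∀ m, TensorProduct.assoc R C C M (comul.rTensor M (F m)) = F.lTensor C (F m))
    (m : M) :
    F (TensorProduct.lid R M (counit.rTensor M (F m))) = F m := by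
  rw [← lid_rTensor_counit_lTensor, ← hF, lid_rTensor_counit_assoc_rTensor_comul]

end Coaction

section Structural

variable {R X Y : Type*} [CommSemiring R] [AddCommMonoid X] [Module R X] [AddCommMonoid Y]
  [Module R Y]

theorem assoc_rTensor_map_assoc_symm (f g : X →ₗ[R] Y) (t : X ⊗[R] (X ⊗[R] X)) :
    TensorProduct.assoc R Y Y X ((map f g).rTensor X ((TensorProduct.assoc R X X X).symm t)) =
      map f (g.rTensor X) t := by
  induction t using TensorProduct.induction_on with
  | zero => simp
  | add s t hs ht => simp only [map_add, hs, ht]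
  | tmul x s =>
    induction s with
    | zero => simp
    | add s t hs ht => simp only [tmul_add, map_add, hs, ht]
    | tmul y z => simp

end Structural

section DiagCoaction

open LinearMap (mul')

variable {R H : Type*} [CommSemiring R] [Semiring H] [Algebra R H]

noncomputable def diagCoaction (Δ : H →ₗ[R] H ⊗[R] H) : H ⊗[R] H →ₗ[R] H ⊗[R] (H ⊗[R] H) :=
  (mul' R H).rTensor _ ∘ₗ (tensorTensorTensorComm R H H H H).toLinearMap ∘ₗ map Δ Δ

theorem diagCoaction_tmul_of_eq_sum {Δ : H →ₗ[R] H ⊗[R] H} {p q : H} {n m : ℕ}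
    {x y : Fin n → H} {u v : Fin m → H} (hp : Δ p = ∑ i, x i ⊗ₜ[R] y i)
    (hq : Δ q = ∑ j, u j ⊗ₜ[R] v j) :
    diagCoaction Δ (p ⊗ₜ q) = ∑ i, ∑ j, (x i * u j) ⊗ₜ[R] (y i ⊗ₜ[R] v j) := by
  simp only [diagCoaction, LinearMap.comp_apply, LinearEquiv.coe_coe, map_tmul, hp, hq,
    sum_tmul, tmul_sum, map_sum, tensorTensorTensorComm_tmul, LinearMap.rTensor_tmul,
    LinearMap.mul'_apply]
  exact Finset.sum_comm

variable [Coalgebra R H]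

theorem comul_comp_mul' (hmul : ∀ a b : H, comul (R := R) (a * b) = comul a * comul b) :
    comul ∘ₗ mul' R H = map (mul' R H) (mul' R H) ∘ₗ comul (A := H ⊗[R] H) := by
  refine TensorProduct.ext' fun a b => ?_
  rw [LinearMap.comp_apply, LinearMap.mul'_apply, hmul, ← LinearMap.mul'_apply (R := R),
    LinearMap.mul'_tensor]
  rfl

theorem diagCoaction_coassoc (hmul : ∀ a b : H, comul (R := R) (a * b) = comul a * comul b)
    (t : H ⊗[R] H) :
    TensorProduct.assoc R H H (H ⊗[R] H) (comul.rTensor _ (diagCoaction comul t)) =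
      (diagCoaction comul).lTensor H (diagCoaction comul t) := by
  have hdiag : diagCoaction (comul (R := R) (A := H)) = (mul' R H).rTensor _ ∘ₗ comul := rfl
  calc _ = TensorProduct.assoc R H H (H ⊗[R] H)
        ((map (mul' R H) (mul' R H)).rTensor _ (comul.rTensor _ (comul (A := H ⊗[R] H) t))) := by
          rw [hdiag, LinearMap.comp_apply, ← LinearMap.rTensor_comp_apply,
            comul_comp_mul' hmul, LinearMap.rTensor_comp_apply]
    _ = (map (mul' R H) ((mul' R H).rTensor _) ∘ₗ comul.lTensor _) (comul (A := H ⊗[R] H) t) := by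
          rw [LinearMap.comp_apply, ← coassoc_apply, ← assoc_rTensor_map_assoc_symm,
            LinearEquiv.symm_apply_apply]
    _ = _ := by
          rw [LinearMap.map_comp_lTensor, ← LinearMap.lTensor_comp_rTensor, hdiag]
          rfl

end DiagCoaction

section WeakHopf

variable {k H A : Type*} [Field k] [Ring H] [Algebra k H] [Ring A] [Algebra k A]
  {W : WeakHopfData k H}

noncomputable abbrev IsWeakHopf.toCoalgebra (hW : IsWeakHopf W) : Coalgebra k H where
  comul := W.Δ
  counit := W.ε
  coassoc := LinearMap.ext hW.coassoc
  rTensor_counit_comp_comul := LinearMap.ext fun h =>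
    (TensorProduct.lid k H).injective (by simpa using hW.counit_left h)
  lTensor_counit_comp_comul := LinearMap.ext fun h =>
    (TensorProduct.rid k H).injective (by simpa using hW.counit_right h)

theorem mul'_map_diagCoaction {ρ : H →ₗ[k] A →ₗ[k] A} {ς : H ⊗[k] H →ₗ[k] A}
    (h11 : cond11 ρ) (h18 : cond18 W ρ ⇑ς) (h19 : cond19 W ρ ⇑ς) (z : H ⊗[k] H) :
    LinearMap.mul' k A (map (ρ.flip 1) ς (diagCoaction W.Δ z)) = ς z := by
  induction z with
  | zero => simp
  | add s t hs ht => simp only [map_add, hs, ht]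
  | tmul p q =>
    obtain ⟨n, x, y, hp⟩ := exists_sum_tmul_eq (W.Δ p)
    obtain ⟨m, u, v, hq⟩ := exists_sum_tmul_eq (W.Δ q)
    rw [diagCoaction_tmul_of_eq_sum hp hq, h19 p q n x y m u v hp hq,
      ← h18 p q 1 n x y m u v hp hq]
    simp only [map_sum, map_tmul, LinearMap.mul'_apply, LinearMap.flip_apply, h11 _ _]

end WeakHopf

/-- under conditions (11), (18) and (19), one has
`ε(h⁽¹⁾l⁽¹⁾)ς(h⁽²⁾⊗l⁽²⁾) = ς(h⊗l)`. -/
theorem statement12 {k H A : Type*} [Field k] [Ring H] [Algebra k H] [Ring A] [Algebra k A]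
    (W : WeakHopfData k H) (hW : IsWeakHopf W) (ρ : H →ₗ[k] A →ₗ[k] A)
    (ς : H ⊗[k] H →ₗ[k] A)
    (h11 : cond11 ρ) (h18 : cond18 W ρ ⇑ς) (h19 : cond19 W ρ ⇑ς) :
    ∀ (h g : H) (n : ℕ) (x y : Fin n → H) (m : ℕ) (u v : Fin m → H),
      W.Δ h = ∑ i, x i ⊗ₜ[k] y i → W.Δ g = ∑ j, u j ⊗ₜ[k] v j →
        ∑ i, ∑ j, W.ε (x i * u j) • ς (y i ⊗ₜ[k] v j) = ς (h ⊗ₜ[k] g) := by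
  intro h g n x y m u v hh hg
  let _ : Coalgebra k H := hW.toCoalgebra
  have hcounit : ∑ i, ∑ j, W.ε (x i * u j) • ς (y i ⊗ₜ[k] v j) =
      ς (TensorProduct.lid k _ (W.ε.rTensor _ (diagCoaction W.Δ (h ⊗ₜ g)))) := by
    simp [diagCoaction_tmul_of_eq_sum hh hg, map_sum]
  have hcoaction : diagCoaction W.Δ (TensorProduct.lid k _ (W.ε.rTensor _
      (diagCoaction W.Δ (h ⊗ₜ g)))) = diagCoaction W.Δ (h ⊗ₜ g) :=
    coaction_lid_rTensor_counit_coaction _ (diagCoaction_coassoc hW.comul_mul) _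
  rw [hcounit, ← mul'_map_diagCoaction h11 h18 h19, hcoaction, mul'_map_diagCoaction h11 h18 h19]
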